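/- Let (θ₁, φ₁), …, (θ_{n_T}, φ_{n_T}) be independent, each uniformly distributed on [0,2π]², set hᵢ := sin θᵢ·sin φᵢ, and for a real number a and a natural number n_R ≥ 1 define Ω := Σ_{i=1}^{n_T} Σ_{j=1}^{n_T} Σ_{s=1}^{n_R−1} (n_R − s)·cos(s·a·(hᵢ − hⱼ)). Then E[Ω] = n_T·n_R·(n_R − 1)/2 + n_T·(n_T − 1)·Σ_{s=1}^{n_R−1} (n_R − s)·J₀(s·a/2)⁴. -/

import Mathlib

/-
Each summand of `Ω` has expectation `1` on the diagonal `i = j`. Off the diagonal, `hᵢ` and `hⱼ`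
are independent, so `cos (c (hᵢ - hⱼ)) = cos (c hᵢ) cos (c hⱼ) + sin (c hᵢ) sin (c hⱼ)` has
expectation `E[cos (c h)]² + E[sin (c h)]²`. The sine term vanishes by the symmetry
`t ↦ 2π - t`, and `E[cos (c h)] = J₀ (c/2)²` is Neumann's addition formula
`J₀(x)² = (1/2π) ∫₀^{2π} J₀(2x sin v) dv`: write `J₀(x)²` as a double integral of
`cos (x (sin t - sin u))`, substitute `u = t + v` and use
`sin t - sin (t + v) = -2 sin (v/2) cos (t + v/2)` together with periodicity in `t`.
The remaining sum over `s` is `∑ (n_R - s) = n_R (n_R - 1)/2`.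
-/

open Real MeasureTheory Finset

/-- Bessel function of the first kind of order zero (integral representation). -/
noncomputable def J₀ (x : ℝ) : ℝ :=
  (1 / (2 * π)) * ∫ t in (0:ℝ)..(2 * π), Real.cos (x * Real.sin t)

open ProbabilityTheory
open scoped ENNReal

lemma integral_cos_mul_sin (x : ℝ) : ∫ t in 0..2 * π, cos (x * sin t) = 2 * π * J₀ x := by
  rw [J₀]
  field_simp

lemma continuous_J₀ : Continuous J₀ :=
  continuous_const.mul <|
    intervalIntegral.continuous_parametric_intervalIntegral_of_continuous' (by fun_prop) _ _

lemma J₀_neg (x : ℝ) : J₀ (-x) = J₀ x := by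
  simp only [J₀, neg_mul, cos_neg]

lemma Function.Periodic.intervalIntegral_comp_add_right {f : ℝ → ℝ} {T : ℝ}
    (hf : Function.Periodic f T) (d : ℝ) :
    ∫ t in 0..T, f (t + d) = ∫ t in 0..T, f t := by
  rw [intervalIntegral.integral_comp_add_right, zero_add, add_comm T,
    hf.intervalIntegral_add_eq d 0, zero_add]

lemma intervalIntegral_intervalIntegral_swap_of_continuous {F : ℝ → ℝ → ℝ}
    (hF : Continuous (Function.uncurry F)) (a b c d : ℝ) :
    ∫ x in a..b, ∫ y in c..d, F x y = ∫ y in c..d, ∫ x in a..b, F x y :=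
  intervalIntegral_intervalIntegral_swap <|
    (hF.continuousOn.integrableOn_compact (isCompact_uIcc.prod isCompact_uIcc)).mono_set
      (Set.prod_mono Set.uIoc_subset_uIcc Set.uIoc_subset_uIcc)

lemma integral_sin_mul_sin (x : ℝ) : ∫ t in 0..2 * π, sin (x * sin t) = 0 := by
  have h := intervalIntegral.integral_comp_sub_left (fun t ↦ sin (x * sin t)) (2 * π)
    (a := 0) (b := 2 * π)
  simp only [sin_two_pi_sub, mul_neg, sin_neg, intervalIntegral.integral_neg, sub_self,
    sub_zero] at h
  linarith

lemma integral_cos_mul_add_sin (x y : ℝ) :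
    ∫ u in 0..2 * π, cos (x * (y + sin u)) = ∫ u in 0..2 * π, cos (x * (y - sin u)) := by
  have h := intervalIntegral.integral_comp_sub_left (fun u ↦ cos (x * (y + sin u))) (2 * π)
    (a := 0) (b := 2 * π)
  simp only [sin_two_pi_sub, sub_self, sub_zero, ← sub_eq_add_neg] at h
  exact h.symm

lemma sq_integral_cos_mul_sin (x : ℝ) :
    (∫ t in 0..2 * π, cos (x * sin t)) ^ 2 =
      ∫ t in 0..2 * π, ∫ u in 0..2 * π, cos (x * (sin t - sin u)) := by
  rw [sq, ← intervalIntegral.integral_mul_const]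
  refine intervalIntegral.integral_congr fun t _ ↦ ?_
  have product_to_sum : ∀ u, cos (x * sin t) * cos (x * sin u) =
      (cos (x * (sin t - sin u)) + cos (x * (sin t + sin u))) / 2 := fun u ↦ by
    rw [mul_sub, mul_add, cos_sub, cos_add]
    ring
  simp only [← intervalIntegral.integral_const_mul, product_to_sum]
  rw [intervalIntegral.integral_div, intervalIntegral.integral_add
    (by apply Continuous.intervalIntegrable; fun_prop)
    (by apply Continuous.intervalIntegrable; fun_prop), integral_cos_mul_add_sin]
  ring

lemma integral_cos_mul_sin_sub_sin (x t : ℝ) :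
    ∫ u in 0..2 * π, cos (x * (sin t - sin u)) =
      ∫ v in 0..2 * π, cos (2 * x * sin (v / 2) * cos (t + v / 2)) := by
  have hper : Function.Periodic (fun u ↦ cos (x * (sin t - sin u))) (2 * π) := fun u ↦ by
    simp only [sin_add_two_pi]
  rw [← hper.intervalIntegral_comp_add_right t]
  refine intervalIntegral.integral_congr fun v _ ↦ ?_
  rw [sin_sub_sin, ← cos_neg]
  congr 1
  rw [show (t - (v + t)) / 2 = -(v / 2) by ring, show (t + (v + t)) / 2 = t + v / 2 by ring,
    sin_neg]
  ring

lemma integral_cos_mul_cos_add (y w : ℝ) :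
    ∫ t in 0..2 * π, cos (y * cos (t + w)) = 2 * π * J₀ y := by
  have hper : Function.Periodic (fun t ↦ cos (y * sin t)) (2 * π) := fun t ↦ by
    simp only [sin_add_two_pi]
  have hshift : ∀ t, cos (t + w) = sin (t + (w + π / 2)) := fun t ↦ by
    rw [← add_assoc, sin_add_pi_div_two]
  simp only [hshift]
  rw [hper.intervalIntegral_comp_add_right, integral_cos_mul_sin]

lemma integral_J₀_mul_sin_half (c : ℝ) :
    ∫ v in 0..2 * π, J₀ (c * sin (v / 2)) = ∫ v in 0..2 * π, J₀ (c * sin v) := by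
  have hper : Function.Periodic (fun v ↦ J₀ (c * sin v)) π := fun v ↦ by
    simp only [sin_add_pi, mul_neg, J₀_neg]
  have hint : ∀ a b, IntervalIntegrable (fun v ↦ J₀ (c * sin v)) volume a b := fun _ _ ↦
    (continuous_J₀.comp (by fun_prop)).intervalIntegrable _ _
  rw [intervalIntegral.integral_comp_div (fun v ↦ J₀ (c * sin v)) two_ne_zero, two_mul π,
    hper.intervalIntegral_add_eq_add 0 π hint]
  simp [two_mul]

lemma integral_integral_cos_mul_sin_mul_sin (c : ℝ) :
    ∫ t in 0..2 * π, ∫ u in 0..2 * π, cos (c * (sin t * sin u)) = (2 * π * J₀ (c / 2)) ^ 2 := by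
  have hc : c = 2 * (c / 2) := by ring
  calc ∫ t in 0..2 * π, ∫ u in 0..2 * π, cos (c * (sin t * sin u))
      = ∫ t in 0..2 * π, 2 * π * J₀ (c * sin t) := by
        simp only [← mul_assoc, integral_cos_mul_sin]
    _ = ∫ v in 0..2 * π, ∫ t in 0..2 * π, cos (c * sin (v / 2) * cos (t + v / 2)) := by
        simp only [integral_cos_mul_cos_add, intervalIntegral.integral_const_mul,
          integral_J₀_mul_sin_half]
    _ = ∫ t in 0..2 * π, ∫ u in 0..2 * π, cos (c / 2 * (sin t - sin u)) := by
        rw [intervalIntegral_intervalIntegral_swap_of_continuous (by fun_prop)]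
        simp only [integral_cos_mul_sin_sub_sin, ← hc]
    _ = (2 * π * J₀ (c / 2)) ^ 2 := by
        rw [← sq_integral_cos_mul_sin, integral_cos_mul_sin]

section Pi

variable {ι α : Type*} [Fintype ι] [MeasurableSpace α]

lemma MeasureTheory.Measure.pi_smul_const (μ : Measure α) [SigmaFinite μ] (c : ℝ≥0∞)
    [SigmaFinite (c • μ)] :
    Measure.pi (fun _ : ι ↦ c • μ) = c ^ Fintype.card ι • Measure.pi fun _ : ι ↦ μ := by
  refine Measure.pi_eq fun s _ ↦ ?_
  simp [Measure.pi_pi, Finset.prod_mul_distrib]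

lemma integral_pi_cond (μ : Measure α) [SigmaFinite μ] (s : Set α) (f : (ι → α) → ℝ) :
    ∫ x, f x ∂Measure.pi (fun _ ↦ μ[|s]) =
      (μ.real s)⁻¹ ^ Fintype.card ι * ∫ x, f x ∂Measure.pi fun _ ↦ μ.restrict s := by
  have : SigmaFinite ((μ s)⁻¹ • μ.restrict s) := inferInstanceAs (SigmaFinite μ[|s])
  rw [ProbabilityTheory.cond, Measure.pi_smul_const, integral_smul_measure, ENNReal.toReal_pow,
    ENNReal.toReal_inv, smul_eq_mul, measureReal_def]

lemma integral_pi_comp_eval_mul_comp_eval (μ : Measure α) [IsProbabilityMeasure μ] {i j : ι}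
    (hij : i ≠ j) {F G : α → ℝ} (hF : Measurable F) (hG : Measurable G) :
    ∫ x, F (x i) * G (x j) ∂Measure.pi (fun _ ↦ μ) = (∫ a, F a ∂μ) * ∫ a, G a ∂μ := by
  have hindep : IndepFun (fun x : ι → α ↦ F (x i)) (fun x ↦ G (x j)) (Measure.pi fun _ ↦ μ) :=
    ((iIndepFun_pi (X := fun _ ↦ id) fun _ ↦ aemeasurable_id).indepFun hij).comp hF hG
  calc ∫ x, F (x i) * G (x j) ∂Measure.pi (fun _ ↦ μ)
      = (∫ x, F (x i) ∂Measure.pi fun _ ↦ μ) * ∫ x, G (x j) ∂Measure.pi fun _ ↦ μ :=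
        hindep.integral_mul_eq_mul_integral (hF.comp (measurable_pi_apply i)).aestronglyMeasurable
          (hG.comp (measurable_pi_apply j)).aestronglyMeasurable
    _ = (∫ a, F a ∂μ) * ∫ a, G a ∂μ := by
        rw [integral_comp_eval hF.aestronglyMeasurable, integral_comp_eval hG.aestronglyMeasurable]

end Pi

lemma Measurable.integrable_of_abs_le_one {α : Type*} [MeasurableSpace α] {μ : Measure α}
    [IsFiniteMeasure μ] {f : α → ℝ} (hf : Measurable f) (h : ∀ x, |f x| ≤ 1) : Integrable f μ :=
  .of_bound hf.aestronglyMeasurable 1 (ae_of_all _ h)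

def angleSquare : Set (ℝ × ℝ) := Set.Icc 0 (2 * π) ×ˢ Set.Icc 0 (2 * π)

noncomputable def uniformAnglePair : Measure (ℝ × ℝ) := volume[|angleSquare]

lemma volume_angleSquare : volume angleSquare = ENNReal.ofReal ((2 * π) ^ 2) := by
  rw [angleSquare, Measure.volume_eq_prod, Measure.prod_prod, Real.volume_Icc, sub_zero, sq,
    ENNReal.ofReal_mul two_pi_pos.le]

lemma volume_real_angleSquare : volume.real angleSquare = (2 * π) ^ 2 := by
  rw [measureReal_def, volume_angleSquare, ENNReal.toReal_ofReal (by positivity)]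

instance : IsProbabilityMeasure uniformAnglePair :=
  cond_isProbabilityMeasure_of_finite (by simp [volume_angleSquare]) (by simp [volume_angleSquare])

lemma volume_restrict_angleSquare :
    volume.restrict angleSquare =
      (volume.restrict (Set.Icc 0 (2 * π))).prod (volume.restrict (Set.Icc 0 (2 * π))) := by
  rw [angleSquare, Measure.volume_eq_prod, Measure.prod_restrict]

lemma integral_pi_prod_restrict_Icc {ι : Type*} [Fintype ι] (f : (ι → ℝ × ℝ) → ℝ) :
    ∫ x, f x ∂Measure.pi (fun _ ↦
        (volume.restrict (Set.Icc 0 (2 * π))).prod (volume.restrict (Set.Icc 0 (2 * π)))) =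
      (2 * π) ^ (2 * Fintype.card ι) * ∫ x, f x ∂Measure.pi fun _ ↦ uniformAnglePair := by
  rw [uniformAnglePair, integral_pi_cond, volume_real_angleSquare, volume_restrict_angleSquare,
    ← mul_assoc, inv_pow, ← pow_mul, mul_inv_cancel₀ (by positivity), one_mul]

lemma integral_uniformAnglePair {g : ℝ × ℝ → ℝ} (hg : Continuous g) :
    ∫ y, g y ∂uniformAnglePair = ((2 * π) ^ 2)⁻¹ * ∫ t in 0..2 * π, ∫ u in 0..2 * π, g (t, u) := by
  have hint : Integrable g (volume.restrict angleSquare) :=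
    hg.continuousOn.integrableOn_compact (isCompact_Icc.prod isCompact_Icc)
  rw [volume_restrict_angleSquare] at hint
  rw [uniformAnglePair, ProbabilityTheory.cond, integral_smul_measure, ENNReal.toReal_inv,
    ← measureReal_def, volume_real_angleSquare, smul_eq_mul, volume_restrict_angleSquare,
    integral_prod _ hint]
  simp only [integral_Icc_eq_integral_Ioc, ← intervalIntegral.integral_of_le two_pi_pos.le]

lemma integral_cos_mul_sin_mul_sin_uniformAnglePair (c : ℝ) :
    ∫ y, cos (c * (sin y.1 * sin y.2)) ∂uniformAnglePair = J₀ (c / 2) ^ 2 := by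
  rw [integral_uniformAnglePair (by fun_prop), integral_integral_cos_mul_sin_mul_sin]
  field_simp

lemma integral_sin_mul_sin_mul_sin_uniformAnglePair (c : ℝ) :
    ∫ y, sin (c * (sin y.1 * sin y.2)) ∂uniformAnglePair = 0 := by
  rw [integral_uniformAnglePair (by fun_prop)]
  simp only [← mul_assoc, integral_sin_mul_sin, intervalIntegral.integral_zero, mul_zero]

lemma integral_pi_cos_mul_sub {ι : Type*} [Fintype ι] [DecidableEq ι] (c : ℝ) (i j : ι) :
    ∫ x, cos (c * (sin (x i).1 * sin (x i).2 - sin (x j).1 * sin (x j).2))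
        ∂Measure.pi (fun _ ↦ uniformAnglePair) = if i = j then 1 else J₀ (c / 2) ^ 4 := by
  split_ifs with hij
  · subst hij
    simp
  simp only [mul_sub, cos_sub]
  rw [integral_add (Measurable.integrable_of_abs_le_one (by fun_prop) fun x ↦ ?_)
      (Measurable.integrable_of_abs_le_one (by fun_prop) fun x ↦ ?_),
    integral_pi_comp_eval_mul_comp_eval uniformAnglePair hij
      (F := fun y ↦ cos (c * (sin y.1 * sin y.2))) (G := fun y ↦ cos (c * (sin y.1 * sin y.2)))
      (by fun_prop) (by fun_prop),
    integral_pi_comp_eval_mul_comp_eval uniformAnglePair hij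
      (F := fun y ↦ sin (c * (sin y.1 * sin y.2))) (G := fun y ↦ sin (c * (sin y.1 * sin y.2)))
      (by fun_prop) (by fun_prop),
    integral_cos_mul_sin_mul_sin_uniformAnglePair, integral_sin_mul_sin_mul_sin_uniformAnglePair]
  · ring
  · rw [abs_mul]
    exact mul_le_one₀ (abs_cos_le_one _) (abs_nonneg _) (abs_cos_le_one _)
  · rw [abs_mul]
    exact mul_le_one₀ (abs_sin_le_one _) (abs_nonneg _) (abs_sin_le_one _)

lemma integral_pi_sum_sum_sum_mul_cos {ι : Type*} [Fintype ι] [DecidableEq ι] (S : Finset ℕ)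
    (w c : ℕ → ℝ) :
    ∫ x : ι → ℝ × ℝ, ∑ i, ∑ j, ∑ s ∈ S,
        w s * cos (c s * (sin (x i).1 * sin (x i).2 - sin (x j).1 * sin (x j).2))
        ∂Measure.pi (fun _ ↦ uniformAnglePair) =
      ∑ i : ι, ∑ j : ι, ∑ s ∈ S, w s * (if i = j then 1 else J₀ (c s / 2) ^ 4) := by
  have hint : ∀ (i j : ι) (s : ℕ), Integrable
      (fun x ↦ w s * cos (c s * (sin (x i).1 * sin (x i).2 - sin (x j).1 * sin (x j).2)))
      (Measure.pi fun _ ↦ uniformAnglePair) := fun _ _ _ ↦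
    (Measurable.integrable_of_abs_le_one (by fun_prop) fun _ ↦ abs_cos_le_one _).const_mul _
  rw [integral_finsetSum _ fun i _ ↦ integrable_finsetSum _ fun j _ ↦
    integrable_finsetSum _ fun s _ ↦ hint i j s]
  refine sum_congr rfl fun i _ ↦ ?_
  rw [integral_finsetSum _ fun j _ ↦ integrable_finsetSum _ fun s _ ↦ hint i j s]
  refine sum_congr rfl fun j _ ↦ ?_
  rw [integral_finsetSum _ fun s _ ↦ hint i j s]
  refine sum_congr rfl fun s _ ↦ ?_
  rw [integral_const_mul, integral_pi_cos_mul_sub]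

lemma sum_Icc_natCast_sub (n : ℕ) : ∑ s ∈ Icc 1 (n - 1), ((n : ℝ) - s) = n * (n - 1) / 2 := by
  obtain _ | m := n
  · simp
  rw [Nat.add_sub_cancel]
  push_cast
  induction m with
  | zero => simp
  | succ m ih =>
    rw [sum_Icc_succ_top (by omega)]
    push_cast
    have hshift : ∀ s ∈ Icc 1 m, (m : ℝ) + 1 + 1 - s = (m + 1 - s) + 1 := fun _ _ ↦ by ring
    rw [sum_congr rfl hshift, sum_add_distrib, ih, sum_const, Nat.card_Icc, nsmul_eq_mul]
    push_cast
    ring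

lemma sum_ite_eq_one_else {ι : Type*} [Fintype ι] [DecidableEq ι] (i : ι) (x : ℝ) :
    ∑ j, (if i = j then 1 else x) = 1 + (Fintype.card ι - 1) * x := by
  rw [sum_ite, filter_eq, filter_ne]
  simp [card_erase_of_mem, Nat.cast_sub (Fintype.card_pos_iff.mpr ⟨i⟩)]

lemma sum_sum_sum_mul_ite {ι : Type*} [Fintype ι] [DecidableEq ι] (S : Finset ℕ) (w v : ℕ → ℝ) :
    ∑ i : ι, ∑ j : ι, ∑ s ∈ S, w s * (if i = j then 1 else v s) =
      Fintype.card ι * ∑ s ∈ S, w s +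
        Fintype.card ι * (Fintype.card ι - 1) * ∑ s ∈ S, w s * v s := by
  have hrow : ∀ i : ι, ∑ j, ∑ s ∈ S, w s * (if i = j then 1 else v s) =
      ∑ s ∈ S, w s + (Fintype.card ι - 1) * ∑ s ∈ S, w s * v s := fun i ↦ by
    rw [sum_comm, mul_sum, ← sum_add_distrib]
    refine sum_congr rfl fun s _ ↦ ?_
    rw [← mul_sum, sum_ite_eq_one_else]
    ring
  simp only [hrow, sum_const, card_univ, nsmul_eq_mul]
  ring

theorem stmt_4_general (a : ℝ) (nT nR : ℕ) :
    (1 / (2 * π)) ^ (2 * nT) *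
      ∫ x : Fin nT → ℝ × ℝ,
        (∑ i : Fin nT, ∑ j : Fin nT, ∑ s ∈ Finset.Icc 1 (nR - 1),
          ((nR : ℝ) - s) * Real.cos ((s : ℝ) * a *
            (Real.sin (x i).1 * Real.sin (x i).2 -
             Real.sin (x j).1 * Real.sin (x j).2)))
        ∂(Measure.pi fun _ : Fin nT =>
            (volume.restrict (Set.Icc (0:ℝ) (2 * π))).prod
              (volume.restrict (Set.Icc (0:ℝ) (2 * π))))
    = (nT : ℝ) * ((nR : ℝ) * ((nR : ℝ) - 1)) / 2 +
      (nT : ℝ) * ((nT : ℝ) - 1) *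
        ∑ s ∈ Finset.Icc 1 (nR - 1), ((nR : ℝ) - s) * (J₀ ((s : ℝ) * a / 2)) ^ 4 := by
  rw [integral_pi_prod_restrict_Icc, Fintype.card_fin, ← mul_assoc, ← mul_pow,
    one_div_mul_cancel two_pi_pos.ne', one_pow, one_mul,
    integral_pi_sum_sum_sum_mul_cos _ (fun s ↦ (nR : ℝ) - s) (fun s ↦ (s : ℝ) * a),
    sum_sum_sum_mul_ite, sum_Icc_natCast_sub, Fintype.card_fin]
  ring

theorem stmt_4 (a : ℝ) (nT nR : ℕ) (hR : 1 ≤ nR) :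
    (1 / (2 * π)) ^ (2 * nT) *
      ∫ x : Fin nT → ℝ × ℝ,
        (∑ i : Fin nT, ∑ j : Fin nT, ∑ s ∈ Finset.Icc 1 (nR - 1),
          ((nR : ℝ) - s) * Real.cos ((s : ℝ) * a *
            (Real.sin (x i).1 * Real.sin (x i).2 -
             Real.sin (x j).1 * Real.sin (x j).2)))
        ∂(Measure.pi fun _ : Fin nT =>
            (volume.restrict (Set.Icc (0:ℝ) (2 * π))).prod
              (volume.restrict (Set.Icc (0:ℝ) (2 * π))))
    = (nT : ℝ) * ((nR : ℝ) * ((nR : ℝ) - 1)) / 2 +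
      (nT : ℝ) * ((nT : ℝ) - 1) *
        ∑ s ∈ Finset.Icc 1 (nR - 1), ((nR : ℝ) - s) * (J₀ ((s : ℝ) * a / 2)) ^ 4 :=
  stmt_4_general a nT nR
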